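/- Let m ≥ 1 be an integer, let x_1, ..., x_m be distinct positive real numbers, and let p_0, q_0, p_{j,k}, q_{j,k} : J → ℂ (j = 1,...,m; k = 1,2,3) be differentiable functions on an interval J ⊆ (0,∞) satisfying the system (1.4) (no constraint is assumed). Then for each j = 1,...,m, the function r ↦ Σ_{k=1}^3 p_{j,k}(r) q_{j,k}(r) is constant on J. In particular, if Σ_{k=1}^3 p_{j,k}(r_0) q_{j,k}(r_0) = 0 for some r_0 ∈ J, then the constraint Σ_{k=1}^3 p_{j,k}(r) q_{j,k}(r) = 0 holds for all r ∈ J. -/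

import Mathlib

open Real Complex Filter Topology Finset

noncomputable section

/-- `S_{kl}(r) = ∑_j p_{j,k}(r) q_{j,l}(r)` (indices shifted: `k l : Fin 3` with `0,1,2`
corresponding to `1,2,3` in the paper). -/
def pS {m : ℕ} (p q : Fin m → Fin 3 → ℝ → ℂ) (k l : Fin 3) (r : ℝ) : ℂ :=
  ∑ j, p j k r * q j l r

/-- The system of ODEs (1.4) holding at the point `r`. -/
def PearceySystemAt {m : ℕ} (x : Fin m → ℝ) (p0 q0 : ℝ → ℂ)
    (p q : Fin m → Fin 3 → ℝ → ℂ) (r : ℝ) : Prop :=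
  HasDerivAt p0 (-(Real.sqrt 2 * ∑ j, (x j : ℂ) * p j 2 r * q j 1 r)) r ∧
  HasDerivAt q0 (Real.sqrt 2 * ∑ j, (x j : ℂ) * p j 1 r * q j 0 r) r ∧
  ∀ j : Fin m,
    HasDerivAt (q j 0)
      (2 / r * pS p q 0 0 r * q j 0 r + x j * q j 1 r + 2 / r * pS p q 2 0 r * q j 2 r) r ∧
    HasDerivAt (q j 1)
      (Real.sqrt 2 * p0 r * x j * q j 0 r + 2 / r * pS p q 1 1 r * q j 1 r + x j * q j 2 r) r ∧
    HasDerivAt (q j 2)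
      ((r * x j ^ 2 + 2 / r * pS p q 0 2 r) * q j 0 r + Real.sqrt 2 * q0 r * x j * q j 1 r
        + 2 / r * pS p q 2 2 r * q j 2 r) r ∧
    HasDerivAt (p j 0)
      (-(2 / r * pS p q 0 0 r * p j 0 r) - Real.sqrt 2 * p0 r * x j * p j 1 r
        - (r * x j ^ 2 + 2 / r * pS p q 0 2 r) * p j 2 r) r ∧
    HasDerivAt (p j 1)
      (-(x j * p j 0 r) - 2 / r * pS p q 1 1 r * p j 1 r
        - Real.sqrt 2 * q0 r * x j * p j 2 r) r ∧
    HasDerivAt (p j 2)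
      (-(2 / r * pS p q 2 0 r * p j 0 r) - x j * p j 1 r - 2 / r * pS p q 2 2 r * p j 2 r) r

/-- The constraints (1.5). -/
def PearceyConstraint {m : ℕ} (p q : Fin m → Fin 3 → ℝ → ℂ) : Prop :=
  ∀ r : ℝ, 0 < r → ∀ j : Fin m, ∑ k, p j k r * q j k r = 0

/-- Pointwise `S_{kl}`. -/
def pSpt {m : ℕ} (p q : Fin m → Fin 3 → ℂ) (k l : Fin 3) : ℂ := ∑ j, p j k * q j l

/-- The Hamiltonian (1.7), as a function of `r` and the `6m+2` complex variables. -/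
def pearceyH {m : ℕ} (x : Fin m → ℝ) (r : ℝ) (p0 q0 : ℂ) (p q : Fin m → Fin 3 → ℂ) : ℂ :=
  Real.sqrt 2 * p0 * ∑ j, (x j : ℂ) * p j 1 * q j 0
    + Real.sqrt 2 * q0 * ∑ j, (x j : ℂ) * p j 2 * q j 1
    + ∑ j, (x j : ℂ) * p j 0 * q j 1
    + ∑ j, (x j : ℂ) * p j 1 * q j 2
    + ∑ j, (r : ℂ) * (x j : ℂ) ^ 2 * p j 2 * q j 0
    + 1 / (2 * (r : ℂ)) *
        ((pSpt p q 0 0 - pSpt p q 1 1 + pSpt p q 2 2) ^ 2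
          - 2 * ∑ k, ∑ l, (p k 0 * p l 2 - p k 2 * p l 0) * (q k 0 * q l 2 - q k 2 * q l 0))

/-- The Hamiltonian evaluated along functions of `r`. -/
def pearceyHAlong {m : ℕ} (x : Fin m → ℝ) (p0 q0 : ℝ → ℂ)
    (p q : Fin m → Fin 3 → ℝ → ℂ) (r : ℝ) : ℂ :=
  pearceyH x r (p0 r) (q0 r) (fun j k => p j k r) (fun j k => q j k r)

open Matrix

section AdjointSystem

variable {𝕜 𝔸 ι : Type*} [NontriviallyNormedField 𝕜] [NormedCommRing 𝔸] [NormedAlgebra 𝕜 𝔸]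
  [Fintype ι]

theorem hasDerivAt_sum_mul_eq_zero_of_adjoint_system (A : Matrix ι ι 𝔸) (p q : ι → 𝕜 → 𝔸)
    {t : 𝕜} (hp : ∀ k, HasDerivAt (p k) (-(Aᵀ *ᵥ fun i => p i t) k) t)
    (hq : ∀ k, HasDerivAt (q k) ((A *ᵥ fun i => q i t) k) t) :
    HasDerivAt (fun s => ∑ k, p k s * q k s) 0 t := by
  refine (HasDerivAt.fun_sum fun k _ => (hp k).fun_mul (hq k)).congr_deriv ?_
  have hcancel : (Aᵀ *ᵥ fun i => p i t) ⬝ᵥ (fun i => q i t)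
      = (fun i => p i t) ⬝ᵥ (A *ᵥ fun i => q i t) := by
    rw [Matrix.mulVec_transpose, Matrix.dotProduct_mulVec]
  simpa only [Pi.neg_apply, neg_mul, Finset.sum_add_distrib, Finset.sum_neg_distrib,
    neg_add_eq_zero, dotProduct] using hcancel

end AdjointSystem

theorem Convex.eq_of_forall_hasDerivAt_eq_zero {E : Type*} [NormedAddCommGroup E]
    [NormedSpace ℝ E] {f : ℝ → E} {s : Set ℝ} (hs : Convex ℝ s) (hf : ∀ x ∈ s, HasDerivAt f 0 x)
    {x y : ℝ} (hx : x ∈ s) (hy : y ∈ s) : f x = f y := by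
  have h := hs.norm_image_sub_le_of_norm_hasDerivWithin_le
    (fun z hz => (hf z hz).hasDerivWithinAt) (fun _ _ => norm_zero.le) hy hx
  rwa [zero_mul, norm_le_zero_iff, sub_eq_zero] at h

/-- The coefficient matrix `A_j(r)` of (1.4), which reads `q_j' = A_j q_j`, `p_j' = -A_jᵀ p_j`. -/
def pearceyCoeffMatrix {m : ℕ} (x : Fin m → ℝ) (p0 q0 : ℝ → ℂ) (p q : Fin m → Fin 3 → ℝ → ℂ)
    (j : Fin m) (r : ℝ) : Matrix (Fin 3) (Fin 3) ℂ :=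
  !![2 / r * pS p q 0 0 r, x j, 2 / r * pS p q 2 0 r;
     Real.sqrt 2 * p0 r * x j, 2 / r * pS p q 1 1 r, x j;
     r * x j ^ 2 + 2 / r * pS p q 0 2 r, Real.sqrt 2 * q0 r * x j, 2 / r * pS p q 2 2 r]

section PearceySystem

variable {m : ℕ} {x : Fin m → ℝ} {p0 q0 : ℝ → ℂ} {p q : Fin m → Fin 3 → ℝ → ℂ} {r : ℝ}

theorem PearceySystemAt.hasDerivAt_q (h : PearceySystemAt x p0 q0 p q r) (j : Fin m)
    (k : Fin 3) :
    HasDerivAt (q j k) ((pearceyCoeffMatrix x p0 q0 p q j r *ᵥ fun i => q j i r) k) r := by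
  obtain ⟨hq0, hq1, hq2, -⟩ := h.2.2 j
  fin_cases k <;>
    simp only [pearceyCoeffMatrix, mulVec, dotProduct, of_apply, cons_val', cons_val_zero,
      cons_val_one, cons_val_fin_one, Matrix.cons_val, Fin.sum_univ_three, Fin.isValue,
      Fin.zero_eta, Fin.mk_one, Fin.reduceFinMk]
  exacts [hq0.congr_deriv (by ring), hq1.congr_deriv (by ring), hq2.congr_deriv (by ring)]

theorem PearceySystemAt.hasDerivAt_p (h : PearceySystemAt x p0 q0 p q r) (j : Fin m)
    (k : Fin 3) :
    HasDerivAt (p j k) (-((pearceyCoeffMatrix x p0 q0 p q j r)ᵀ *ᵥ fun i => p j i r) k) r := by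
  obtain ⟨-, -, -, hp0, hp1, hp2⟩ := h.2.2 j
  fin_cases k <;>
    simp only [pearceyCoeffMatrix, mulVec, dotProduct, transpose_apply, of_apply, cons_val',
      cons_val_zero, cons_val_one, cons_val_fin_one, Matrix.cons_val, Fin.sum_univ_three,
      Fin.isValue, Fin.zero_eta, Fin.mk_one, Fin.reduceFinMk]
  exacts [hp0.congr_deriv (by ring), hp1.congr_deriv (by ring), hp2.congr_deriv (by ring)]

theorem PearceySystemAt.hasDerivAt_constraint (h : PearceySystemAt x p0 q0 p q r) (j : Fin m) :
    HasDerivAt (fun s => ∑ k, p j k s * q j k s) 0 r :=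
  hasDerivAt_sum_mul_eq_zero_of_adjoint_system _ (p j) (q j) (h.hasDerivAt_p j) (h.hasDerivAt_q j)

end PearceySystem

theorem pearcey_constraint_conserved_general
    (m : ℕ) (x : Fin m → ℝ)
    (J : Set ℝ) (hJconn : J.OrdConnected)
    (p0 q0 : ℝ → ℂ) (p q : Fin m → Fin 3 → ℝ → ℂ)
    (hsys : ∀ r ∈ J, PearceySystemAt x p0 q0 p q r) :
    (∀ j : Fin m, ∀ r₁ ∈ J, ∀ r₂ ∈ J,
      (∑ k, p j k r₁ * q j k r₁) = ∑ k, p j k r₂ * q j k r₂) ∧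
    (∀ j : Fin m, ∀ r₀ ∈ J, (∑ k, p j k r₀ * q j k r₀) = 0 →
      ∀ r ∈ J, (∑ k, p j k r * q j k r) = 0) := by
  have hconst : ∀ j : Fin m, ∀ r₁ ∈ J, ∀ r₂ ∈ J,
      (∑ k, p j k r₁ * q j k r₁) = ∑ k, p j k r₂ * q j k r₂ := fun j _ h₁ _ h₂ =>
    hJconn.convex.eq_of_forall_hasDerivAt_eq_zero
      (fun r hr => (hsys r hr).hasDerivAt_constraint j) h₁ h₂
  exact ⟨hconst, fun j r₀ hr₀ hzero r hr => (hconst j r hr r₀ hr₀).trans hzero⟩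

theorem pearcey_constraint_conserved
    (m : ℕ) (hm : 1 ≤ m) (x : Fin m → ℝ)
    (hxpos : ∀ j, 0 < x j) (hxinj : Function.Injective x)
    (J : Set ℝ) (hJ : J ⊆ Set.Ioi (0 : ℝ)) (hJconn : J.OrdConnected)
    (p0 q0 : ℝ → ℂ) (p q : Fin m → Fin 3 → ℝ → ℂ)
    (hsys : ∀ r ∈ J, PearceySystemAt x p0 q0 p q r) :
    (∀ j : Fin m, ∀ r₁ ∈ J, ∀ r₂ ∈ J,
      (∑ k, p j k r₁ * q j k r₁) = ∑ k, p j k r₂ * q j k r₂) ∧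
    (∀ j : Fin m, ∀ r₀ ∈ J, (∑ k, p j k r₀ * q j k r₀) = 0 →
      ∀ r ∈ J, (∑ k, p j k r * q j k r) = 0) :=
  pearcey_constraint_conserved_general m x J hJconn p0 q0 p q hsys
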